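/- arXiv:2103.01916 — 5 statements merged into one kernel-verified Lean document; each statement's English description precedes it below -/
import Mathlib

section
/- Let L be a linear endomorphism of a finite-dimensional complex vector space whose nonzero eigenvalues all have strictly negative real part and whose eigenvalue 0 is semisimple, with associated projection P onto ker L along Im L. Then the integral L⁻ := −∫₀^∞ (exp(sL) − P) ds converges absolutely, L⁻ vanishes on ker L, and L L⁻ = L⁻ L = Id − P, i.e. L⁻ is the pseudo-inverse of L relative to the decomposition V = ker L ⊕ Im L. -/
/-!
On the generalized eigenspace of `L` for an eigenvalue `μ ≠ 0`, which lies in `Im L`,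
`exp (s L) x` is a finite sum of terms `e^{sμ} s^j v_j` and so decays exponentially; on the
generalized eigenspace for `0`, which is `ker L` because `ker L² = ker L`, it is constant equal to
`P x`. Hence `exp (s L) - P` is integrable on `(0, ∞)` and tends to `0`, and since
`d/ds exp (s L) x = exp (s L) (L x)`, the fundamental theorem of calculus gives
`∫₀^∞ exp (s L) (L x) ds = P x - x`. Both `L L⁻` and `L⁻ L` reduce to this integral, because `L`
commutes with `exp (s L)` and hence with its limit `P`.
-/

open MeasureTheory Filter Set Topology
open scoped Nat

section ScalarDecay

variable {μ : ℂ}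

lemma norm_cexp_ofReal_mul_mul_pow {s : ℝ} (hs : 0 ≤ s) (j : ℕ) :
    ‖Complex.exp (s * μ) * (s : ℂ) ^ j‖ = s ^ j * Real.exp (μ.re * s) := by
  rw [norm_mul, norm_pow, Complex.norm_exp, Complex.norm_real, Real.norm_of_nonneg hs,
    Complex.re_ofReal_mul, mul_comm μ.re, mul_comm]

lemma integrableOn_Ioi_cexp_ofReal_mul_mul_pow (hμ : μ.re < 0) (j : ℕ) :
    IntegrableOn (fun s : ℝ => Complex.exp (s * μ) * (s : ℂ) ^ j) (Ioi 0) := by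
  have h := integrableOn_rpow_mul_exp_neg_mul_rpow (s := j) (p := 1)
    (by linarith [j.cast_nonneg (α := ℝ)]) one_pos (neg_pos.2 hμ)
  refine h.mono' (by fun_prop) ((ae_restrict_mem measurableSet_Ioi).mono fun s hs => ?_)
  rw [norm_cexp_ofReal_mul_mul_pow (le_of_lt hs), Real.rpow_one, Real.rpow_natCast, neg_neg]

lemma tendsto_cexp_ofReal_mul_mul_pow_atTop (hμ : μ.re < 0) (j : ℕ) :
    Tendsto (fun s : ℝ => Complex.exp (s * μ) * (s : ℂ) ^ j) atTop (𝓝 0) := by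
  rw [tendsto_zero_iff_norm_tendsto_zero]
  refine (tendsto_rpow_mul_exp_neg_mul_atTop_nhds_zero j _ (neg_pos.2 hμ)).congr' ?_
  filter_upwards [eventually_ge_atTop 0] with s hs
  rw [norm_cexp_ofReal_mul_mul_pow hs, Real.rpow_natCast, neg_neg]

end ScalarDecay

section Exponential

variable {V : Type*} [NormedAddCommGroup V] [NormedSpace ℂ V]

lemma exp_smul_apply_comm (L : V →L[ℂ] V) (s : ℝ) (x : V) :
    NormedSpace.exp (s • L) (L x) = L (NormedSpace.exp (s • L) x) :=
  congr($(((Commute.refl L).smul_left s).exp_left.eq) x)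

lemma apply_comm_of_tendsto_exp_smul_apply (L P : V →L[ℂ] V)
    (h : ∀ x, Tendsto (fun s : ℝ => NormedSpace.exp (s • L) x) atTop (𝓝 (P x))) (x : V) :
    L (P x) = P (L x) :=
  tendsto_nhds_unique (((L.continuous.tendsto _).comp (h x)).congr fun s =>
    (exp_smul_apply_comm L s x).symm) (h (L x))

variable [CompleteSpace V]

lemma exp_apply_eq_sum_of_pow_apply_eq_zero (N : V →L[ℂ] V) {k : ℕ} {x : V}
    (hx : (N ^ k) x = 0) :
    NormedSpace.exp N x = ∑ j ∈ Finset.range k, (j ! : ℂ)⁻¹ • (N ^ j) x := by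
  refine ((NormedSpace.exp_series_hasSum_exp' (𝕂 := ℂ) N).mapL
    (ContinuousLinearMap.apply ℂ V x)).unique (hasSum_sum_of_ne_finset_zero fun j hj => ?_)
  obtain ⟨i, rfl⟩ := Nat.exists_eq_add_of_le (not_lt.1 (Finset.mem_range.not.1 hj))
  rw [ContinuousLinearMap.apply_apply, smul_apply, add_comm, pow_add, mul_apply_eq_comp, hx,
    map_zero, smul_zero]

lemma exp_smul_apply_eq_of_pow_sub_smul_apply_eq_zero (L : V →L[ℂ] V) (μ t : ℂ) {k : ℕ}
    {x : V} (hx : ((L - μ • 1) ^ k) x = 0) :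
    NormedSpace.exp (t • L) x =
      Complex.exp (t * μ) • ∑ j ∈ Finset.range k, (t ^ j / j !) • ((L - μ • 1) ^ j) x := by
  let +nondep : NormedAlgebra ℚ (V →L[ℂ] V) := .restrictScalars ℚ ℂ _
  have hsplit : t • L = algebraMap ℂ (V →L[ℂ] V) (t * μ) + t • (L - μ • 1) := by
    rw [Algebra.algebraMap_eq_smul_one]; module
  have hexp_scalar : NormedSpace.exp (algebraMap ℂ (V →L[ℂ] V) (t * μ)) =
      algebraMap ℂ _ (Complex.exp (t * μ)) := by
    rw [← NormedSpace.algebraMap_exp_comm, Complex.exp_eq_exp_ℂ]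
  have hnil : ((t • (L - μ • 1)) ^ k) x = 0 := by simp [smul_pow, hx]
  rw [hsplit, NormedSpace.exp_add_of_commute (Algebra.commutes _ _), hexp_scalar,
    mul_apply_eq_comp, exp_apply_eq_sum_of_pow_apply_eq_zero _ hnil,
    Algebra.algebraMap_eq_smul_one, smul_apply, one_apply_eq_self]
  congr 1
  refine Finset.sum_congr rfl fun j _ => ?_
  rw [smul_pow, smul_apply, smul_smul, div_eq_inv_mul]

lemma exp_smul_apply_of_apply_eq_zero (L : V →L[ℂ] V) (t : ℂ) {x : V} (hx : L x = 0) :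
    NormedSpace.exp (t • L) x = x := by
  simpa using exp_smul_apply_eq_of_pow_sub_smul_apply_eq_zero L 0 t (k := 1) (by simpa using hx)

lemma integrableOn_and_tendsto_exp_smul_apply_of_mem_maxGenEigenspace (L : V →L[ℂ] V) {μ : ℂ}
    (hμ : μ.re < 0) {x : V} (hx : x ∈ Module.End.maxGenEigenspace (L : V →ₗ[ℂ] V) μ) :
    IntegrableOn (fun s : ℝ => NormedSpace.exp (s • L) x) (Ioi 0) ∧
      Tendsto (fun s : ℝ => NormedSpace.exp (s • L) x) atTop (𝓝 0) := by
  obtain ⟨k, hk⟩ := (Module.End.mem_maxGenEigenspace _ μ x).1 hx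
  have hcoe : ((L - μ • 1 : V →L[ℂ] V) : V →ₗ[ℂ] V) = (L : V →ₗ[ℂ] V) - μ • 1 := rfl
  rw [← hcoe, ← ContinuousLinearMap.toLinearMap_pow] at hk
  have hexp : (fun s : ℝ => NormedSpace.exp (s • L) x) = fun s : ℝ => ∑ j ∈ Finset.range k,
      (Complex.exp (s * μ) * (s : ℂ) ^ j) • ((j ! : ℂ)⁻¹ • ((L - μ • 1) ^ j) x) := by
    funext s
    rw [← Complex.coe_smul, exp_smul_apply_eq_of_pow_sub_smul_apply_eq_zero L μ s hk,
      Finset.smul_sum]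
    refine Finset.sum_congr rfl fun j _ => ?_
    rw [smul_smul, smul_smul, div_eq_mul_inv, mul_assoc]
  rw [hexp]
  refine ⟨integrable_finsetSum _ fun j _ =>
    (integrableOn_Ioi_cexp_ofReal_mul_mul_pow hμ j).smul_const _, ?_⟩
  simpa using tendsto_finsetSum (Finset.range k) fun j _ =>
    (tendsto_cexp_ofReal_mul_mul_pow_atTop hμ j).smul_const ((j ! : ℂ)⁻¹ • ((L - μ • 1) ^ j) x)

lemma integral_Ioi_exp_smul_apply_apply (L : V →L[ℂ] V) {x p : V}
    (hlim : Tendsto (fun s : ℝ => NormedSpace.exp (s • L) x) atTop (𝓝 p))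
    (hint : IntegrableOn (fun s : ℝ => NormedSpace.exp (s • L) (L x)) (Ioi 0)) :
    ∫ s : ℝ in Ioi 0, NormedSpace.exp (s • L) (L x) = p - x := by
  have hderiv (s : ℝ) : HasDerivAt (fun u : ℝ => NormedSpace.exp (u • L) x)
      (NormedSpace.exp (s • L) (L x)) s := by
    simpa [Function.comp_def] using
      ((ContinuousLinearMap.apply ℂ V x).restrictScalars ℝ).hasFDerivAt.comp_hasDerivAt s
        (hasDerivAt_exp_smul_const (𝕂 := ℝ) L s)
  simpa using integral_Ioi_of_hasDerivAt_of_tendsto (hderiv 0).continuousAt.continuousWithinAt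
    (fun s _ => hderiv s) hint hlim

end Exponential

namespace Module.End

variable {K V : Type*} [Field K] [AddCommGroup V] [Module K V]

lemma hasEigenvalue_of_mem_maxGenEigenspace {f : End K V} {μ : K} {x : V}
    (hx : x ∈ f.maxGenEigenspace μ) (hx0 : x ≠ 0) : f.HasEigenvalue μ :=
  (hasUnifEigenvalue_iff_hasUnifEigenvalue_one ENat.top_pos).1 fun h =>
    hx0 (by simpa [h] using hx)

lemma mem_range_of_mem_maxGenEigenspace {f : End K V} {μ : K} (hμ : μ ≠ 0) {x : V}
    (hx : x ∈ f.maxGenEigenspace μ) : x ∈ LinearMap.range f := by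
  open Polynomial in
  obtain ⟨k, hk⟩ := (f.mem_maxGenEigenspace μ x).1 hx
  -- `(X - μ) ^ k = X * q + (-μ) ^ k`, and `(-μ) ^ k` is invertible
  obtain ⟨q, hq⟩ := X_dvd_sub_C (p := (X - C μ) ^ k)
  have hq' : ((f - μ • 1) ^ k) x - (-μ) ^ k • x = f (aeval f q x) := by
    simpa [coeff_zero_eq_eval_zero, Algebra.algebraMap_eq_smul_one, ← neg_smul,
      _root_.smul_pow] using congr($(congrArg (aeval f) hq) x)
  refine ⟨-((-μ) ^ k)⁻¹ • aeval f q x, ?_⟩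
  rw [map_smul, ← hq', hk, zero_sub, neg_smul, smul_neg, neg_neg, smul_smul,
    inv_mul_cancel₀ (pow_ne_zero _ (neg_ne_zero.2 hμ)), one_smul]

lemma apply_eq_zero_of_mem_maxGenEigenspace_zero {f : End K V}
    (hf : LinearMap.ker (f ^ 2) = LinearMap.ker f) {x : V} (hx : x ∈ f.maxGenEigenspace 0) :
    f x = 0 := by
  obtain ⟨k, hk⟩ := (f.mem_maxGenEigenspace 0 x).1 hx
  have hker := ker_pow_constant (f := f) (k := 1) (by rw [pow_one, hf]) k
  rw [zero_smul, sub_zero] at hk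
  have : x ∈ LinearMap.ker (f ^ (1 + k)) := by simp [pow_add, hk]
  simpa [← hker] using this

end Module.End

lemma ContinuousLinearMap.integrable_of_forall_integrable_apply {α 𝕜 E F : Type*}
    [MeasurableSpace α] {ν : Measure α} [NontriviallyNormedField 𝕜] [CompleteSpace 𝕜]
    [NormedAddCommGroup E] [NormedSpace 𝕜 E] [FiniteDimensional 𝕜 E]
    [NormedAddCommGroup F] [NormedSpace 𝕜 F] {T : α → E →L[𝕜] F}
    (h : ∀ x, Integrable (fun a => T a x) ν) : Integrable T ν := by
  let b := Module.finBasis 𝕜 E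
  have hT : T = fun a => ∑ i,
      (LinearMap.toContinuousLinearMap (b.coord i)).smulRight (T a (b i)) := by
    funext a
    refine ContinuousLinearMap.coe_injective (b.ext fun j => ?_)
    simp [Finsupp.single_apply]
  rw [hT]
  refine integrable_finsetSum Finset.univ
    (f := fun i a => (LinearMap.toContinuousLinearMap (b.coord i)).smulRight (T a (b i)))
    fun i _ => ?_
  exact (ContinuousLinearMap.smulRightL 𝕜 E F
    (LinearMap.toContinuousLinearMap (b.coord i))).integrable_comp (h (b i))

section PseudoInverse

variable {V : Type*} [NormedAddCommGroup V] [NormedSpace ℂ V] [FiniteDimensional ℂ V]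

theorem integrableOn_and_tendsto_exp_smul_apply_sub (L P : V →L[ℂ] V)
    (hspec : ∀ μ : ℂ, Module.End.HasEigenvalue (L : V →ₗ[ℂ] V) μ → μ ≠ 0 → μ.re < 0)
    (hss : LinearMap.ker ((L : V →ₗ[ℂ] V) ^ 2) = LinearMap.ker (L : V →ₗ[ℂ] V))
    (hPker : ∀ x ∈ LinearMap.ker (L : V →ₗ[ℂ] V), P x = x)
    (hPim : ∀ x ∈ LinearMap.range (L : V →ₗ[ℂ] V), P x = 0) (x : V) :
    IntegrableOn (fun s : ℝ => NormedSpace.exp (s • L) x - P x) (Ioi 0) ∧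
      Tendsto (fun s : ℝ => NormedSpace.exp (s • L) x - P x) atTop (𝓝 0) := by
  have hx : x ∈ ⨆ μ, Module.End.maxGenEigenspace (L : V →ₗ[ℂ] V) μ := by
    rw [Module.End.iSup_maxGenEigenspace_eq_top]; trivial
  induction hx using Submodule.iSup_induction' with
  | mem μ y hy =>
    by_cases hμ : μ = 0
    · subst hμ
      have hLy := Module.End.apply_eq_zero_of_mem_maxGenEigenspace_zero hss hy
      simp [← Complex.coe_smul, exp_smul_apply_of_apply_eq_zero L _ hLy, hPker y hLy]
    by_cases hy0 : y = 0
    · simp [hy0]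
    have hre := hspec μ (Module.End.hasEigenvalue_of_mem_maxGenEigenspace hy hy0) hμ
    simpa [hPim y (Module.End.mem_range_of_mem_maxGenEigenspace hμ hy)] using
      integrableOn_and_tendsto_exp_smul_apply_of_mem_maxGenEigenspace L hre hy
  | zero => simp
  | add y z _ _ hy hz =>
    simp only [map_add, add_sub_add_comm]
    exact ⟨hy.1.add hz.1, by simpa using hy.2.add hz.2⟩

end PseudoInverse

/-- The pseudo-inverse of `L` as the absolutely convergent integral
`L⁻ = -∫₀^∞ (exp (s L) - P) ds`: it vanishes on `ker L` and satisfies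
`L L⁻ = L⁻ L = Id - P`. -/
theorem pseudo_inverse_integral_formula
    {V : Type*} [NormedAddCommGroup V] [NormedSpace ℂ V] [FiniteDimensional ℂ V]
    (L P : V →L[ℂ] V)
    (hspec : ∀ μ : ℂ, Module.End.HasEigenvalue (L : V →ₗ[ℂ] V) μ → μ ≠ 0 → μ.re < 0)
    (hss : LinearMap.ker ((L : V →ₗ[ℂ] V) ^ 2) = LinearMap.ker (L : V →ₗ[ℂ] V))
    (hPker : ∀ x ∈ LinearMap.ker (L : V →ₗ[ℂ] V), P x = x)
    (hPim : ∀ x ∈ LinearMap.range (L : V →ₗ[ℂ] V), P x = 0) :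
    Integrable (fun s : ℝ => NormedSpace.exp (s • L) - P)
      (volume.restrict (Set.Ioi (0:ℝ))) ∧
    (∀ x ∈ LinearMap.ker (L : V →ₗ[ℂ] V),
      (-∫ s in Set.Ioi (0:ℝ), (NormedSpace.exp (s • L) - P)) x = 0) ∧
    L.comp (-∫ s in Set.Ioi (0:ℝ), (NormedSpace.exp (s • L) - P))
      = ContinuousLinearMap.id ℂ V - P ∧
    (-∫ s in Set.Ioi (0:ℝ), (NormedSpace.exp (s • L) - P)).comp L
      = ContinuousLinearMap.id ℂ V - P := by
  have hdecay := integrableOn_and_tendsto_exp_smul_apply_sub L P hspec hss hPker hPim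
  have hint : Integrable (fun s : ℝ => NormedSpace.exp (s • L) - P)
      (volume.restrict (Set.Ioi (0:ℝ))) :=
    ContinuousLinearMap.integrable_of_forall_integrable_apply fun x => (hdecay x).1
  have hlim x : Tendsto (fun s : ℝ => NormedSpace.exp (s • L) x) atTop (𝓝 (P x)) :=
    tendsto_sub_nhds_zero_iff.1 (hdecay x).2
  have hPL x : P (L x) = 0 := hPim _ (LinearMap.mem_range_self _ x)
  have hLP x : L (P x) = 0 := (apply_comm_of_tendsto_exp_smul_apply L P hlim x).trans (hPL x)
  have hL_comm (s : ℝ) x :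
      L ((NormedSpace.exp (s • L) - P) x) = (NormedSpace.exp (s • L) - P) (L x) := by
    simp [exp_smul_apply_comm, hLP, hPL]
  have hintegral_apply_L x :
      (∫ s in Set.Ioi (0:ℝ), (NormedSpace.exp (s • L) - P)) (L x) = P x - x := by
    rw [ContinuousLinearMap.integral_apply hint]
    simpa [hPL] using integral_Ioi_exp_smul_apply_apply L (hlim x)
      (by simpa [hPL] using (hdecay (L x)).1)
  refine ⟨hint, fun x hx => ?_, ?_, ?_⟩
  · rw [neg_apply, ContinuousLinearMap.integral_apply hint]
    simp [← Complex.coe_smul, exp_smul_apply_of_apply_eq_zero L _ hx, hPker x hx]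
  · ext x
    have hLint := ContinuousLinearMap.integral_comp_comm L (hint.apply_continuousLinearMap x)
    rw [ContinuousLinearMap.comp_apply, neg_apply, map_neg,
      ContinuousLinearMap.integral_apply hint, ← hLint]
    simp_rw [hL_comm, ← ContinuousLinearMap.integral_apply hint, hintegral_apply_L]
    simp
  · ext x
    simp [hintegral_apply_L]
end

section
/- Let H be a Hermitian d×d matrix and L₁,…,L_ℓ be d×d complex matrices that are all diagonal in an orthonormal basis (e_i). Define the Lindbladian L(X) = −i[H,X] + Σ_k (L_k X L_k* − ½{L_k* L_k, X}). Then for all i, j, the matrix E_{i,j} = e_i e_j* is an eigenvector of L with eigenvalue τ_{i,j} = −½ Σ_k |(L_k)_{ii} − (L_k)_{jj}|² − i( H_{ii} − H_{jj} + Σ_k Im( conj((L_k)_{ii}) (L_k)_{jj} ) ). -/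
open Matrix

/-!
Multiplying a matrix unit by a diagonal matrix on either side rescales it:
`A * E_{i,j} = A_{ii} E_{i,j}` and `E_{i,j} * A = A_{jj} E_{i,j}`. Hence every term of the
Lindbladian maps `E_{i,j}` to a multiple of itself, and the dissipator coefficient
`a b̄ - ½(|a|² + |b|²)` with `a = (L_k)_{ii}`, `b = (L_k)_{jj}` equals `-½|a - b|² - i Im(ā b)`.
-/

open Complex ComplexConjugate in
theorem Complex.mul_conj_sub_half_add_conj_mul_self (a b : ℂ) :
    a * conj b - (1/2 : ℂ) * (conj a * a + conj b * b) =
      -(1/2 : ℂ) * normSq (a - b) - I * (conj a * b).im := by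
  rw [normSq_eq_conj_mul_self, im_eq_sub_conj, map_sub, map_mul, conj_conj]
  field_simp
  ring

namespace Matrix

variable {n α : Type*} [DecidableEq n]

theorem single_sub [AddCommGroup α] (i j : n) (a b : α) :
    single i j (a - b) = single i j a - single i j b :=
  map_sub (singleAddMonoidHom i j) a b

theorem sum_single {ι : Type*} [AddCommMonoid α] (s : Finset ι) (i j : n) (f : ι → α) :
    ∑ k ∈ s, single i j (f k) = single i j (∑ k ∈ s, f k) :=
  (map_sum (singleAddMonoidHom i j) f s).symm

variable [Fintype n]

section Semiring

variable [NonUnitalNonAssocSemiring α]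

theorem diagonal_mul_single (a : n → α) (i j : n) (c : α) :
    diagonal a * single i j c = single i j (a i * c) := by
  ext x y
  rw [diagonal_mul]
  by_cases h : i = x ∧ j = y
  · obtain ⟨rfl, rfl⟩ := h
    simp only [single_apply_same]
  · simp only [single_apply_of_ne (h := h), mul_zero]

theorem single_mul_diagonal (b : n → α) (i j : n) (c : α) :
    single i j c * diagonal b = single i j (c * b j) := by
  ext x y
  rw [mul_diagonal]
  by_cases h : i = x ∧ j = y
  · obtain ⟨rfl, rfl⟩ := h
    simp only [single_apply_same]
  · simp only [single_apply_of_ne (h := h), zero_mul]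

theorem IsDiag.mul_single {A : Matrix n n α} (hA : A.IsDiag) (i j : n) (c : α) :
    A * single i j c = single i j (A i i * c) := by
  conv_lhs => rw [← hA.diagonal_diag]
  rw [diagonal_mul_single, diag_apply]

theorem IsDiag.single_mul {A : Matrix n n α} (hA : A.IsDiag) (i j : n) (c : α) :
    single i j c * A = single i j (c * A j j) := by
  conv_lhs => rw [← hA.diagonal_diag]
  rw [single_mul_diagonal, diag_apply]

end Semiring

theorem IsDiag.commutator_single [Ring α] {A : Matrix n n α} (hA : A.IsDiag) (i j : n) :
    A * single i j 1 - single i j 1 * A = single i j (A i i - A j j) := by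
  rw [hA.mul_single, hA.single_mul, mul_one, one_mul, single_sub]

open Complex ComplexConjugate in
theorem IsDiag.dissipator_single {L : Matrix n n ℂ} (hL : L.IsDiag) (i j : n) :
    L * single i j 1 * Lᴴ - (1/2 : ℂ) • (Lᴴ * L * single i j 1 + single i j 1 * (Lᴴ * L)) =
      single i j (-(1/2 : ℂ) * normSq (L i i - L j j) - I * (conj (L i i) * L j j).im) := by
  rw [mul_assoc Lᴴ, ← mul_assoc (single i j 1) Lᴴ]
  simp only [hL.mul_single, hL.single_mul, hL.conjTranspose.mul_single,
    hL.conjTranspose.single_mul, conjTranspose_apply, RCLike.star_def, mul_one, one_mul,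
    ← single_add, smul_single, smul_eq_mul]
  rw [← single_sub, mul_conj_sub_half_add_conj_mul_self]

end Matrix

theorem lindblad_diagonal_eigenvectors_general
    {d ℓ : ℕ} (H : Matrix (Fin d) (Fin d) ℂ) (Lm : Fin ℓ → Matrix (Fin d) (Fin d) ℂ)
    (hHdiag : H.IsDiag) (hLdiag : ∀ k, (Lm k).IsDiag)
    (Lind : Matrix (Fin d) (Fin d) ℂ → Matrix (Fin d) (Fin d) ℂ)
    (hLind : ∀ X, Lind X = -Complex.I • (H * X - X * H) +
      ∑ k, (Lm k * X * (Lm k)ᴴ - (1/2 : ℂ) • ((Lm k)ᴴ * Lm k * X + X * ((Lm k)ᴴ * Lm k))))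
    (i j : Fin d) :
    Lind (Matrix.single i j 1) =
      (-(1/2 : ℂ) * ∑ k, (Complex.normSq (Lm k i i - Lm k j j) : ℂ)
        - Complex.I * (H i i - H j j
            + ∑ k, (((starRingEnd ℂ) (Lm k i i) * Lm k j j).im : ℂ)))
        • Matrix.single i j 1 := by
  rw [hLind, hHdiag.commutator_single,
    Finset.sum_congr rfl fun k _ => (hLdiag k).dissipator_single i j, sum_single,
    smul_single, smul_single, ← single_add, smul_eq_mul, smul_eq_mul, mul_one]
  congr 1
  rw [Finset.sum_sub_distrib, ← Finset.mul_sum, ← Finset.mul_sum]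
  ring

/-- For a Lindbladian whose Hamiltonian and Kraus operators are all diagonal in the
standard basis, each matrix unit `E_{i,j}` is an eigenvector, with explicit eigenvalue. -/
theorem lindblad_diagonal_eigenvectors
    {d ℓ : ℕ} (H : Matrix (Fin d) (Fin d) ℂ) (Lm : Fin ℓ → Matrix (Fin d) (Fin d) ℂ)
    (hH : H.IsHermitian) (hHdiag : H.IsDiag) (hLdiag : ∀ k, (Lm k).IsDiag)
    (Lind : Matrix (Fin d) (Fin d) ℂ → Matrix (Fin d) (Fin d) ℂ)
    (hLind : ∀ X, Lind X = -Complex.I • (H * X - X * H) +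
      ∑ k, (Lm k * X * (Lm k)ᴴ - (1/2 : ℂ) • ((Lm k)ᴴ * Lm k * X + X * ((Lm k)ᴴ * Lm k))))
    (i j : Fin d) :
    Lind (Matrix.single i j 1) =
      (-(1/2 : ℂ) * ∑ k, (Complex.normSq (Lm k i i - Lm k j j) : ℂ)
        - Complex.I * (H i i - H j j
            + ∑ k, (((starRingEnd ℂ) (Lm k i i) * Lm k j j).im : ℂ)))
        • Matrix.single i j 1 :=
  lindblad_diagonal_eigenvectors_general H Lm hHdiag hLdiag Lind hLind i j
end

section
/- Let L be a Lindbladian on M_d(ℂ) with GKSL decomposition L(X) = −i[H,X] + Σ_k (L_k X L_k* − ½{L_k* L_k, X}), and let Π be the orthogonal projection (for the Hilbert–Schmidt inner product) onto matrices diagonal in a fixed orthonormal basis (e_i). Then Π ∘ L ∘ Π = 0 if and only if every Kraus operator L_k is diagonal in the basis (e_i). -/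
open Matrix

/-- For a Lindbladian in GKSL form and `Π` the orthogonal projection onto diagonal
matrices, `Π ∘ L ∘ Π = 0` iff all the Kraus operators are diagonal. -/
theorem pi_lind_pi_eq_zero_iff_kraus_diagonal
    {d ℓ : ℕ} (H : Matrix (Fin d) (Fin d) ℂ) (Lm : Fin ℓ → Matrix (Fin d) (Fin d) ℂ)
    (hH : H.IsHermitian)
    (Lind : Matrix (Fin d) (Fin d) ℂ → Matrix (Fin d) (Fin d) ℂ)
    (hLind : ∀ X, Lind X = -Complex.I • (H * X - X * H) +
      ∑ k, (Lm k * X * (Lm k)ᴴ - (1/2 : ℂ) • ((Lm k)ᴴ * Lm k * X + X * ((Lm k)ᴴ * Lm k))))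
    (Pi : Matrix (Fin d) (Fin d) ℂ → Matrix (Fin d) (Fin d) ℂ)
    (hPi : ∀ X, Pi X = Matrix.diagonal (fun i => X i i)) :
    (∀ X, Pi (Lind (Pi X)) = 0) ↔ (∀ k, (Lm k).IsDiag) := by
  constructor
  · intro hz k i j hij
    set v : Fin d → ℂ := fun m => if m = j then 1 else 0 with hv
    have h := hz (Matrix.diagonal v)
    rw [hPi, hPi] at h
    simp only [Matrix.diagonal_apply_eq] at h
    have hi := congrFun (congrFun h i) i
    simp only [Matrix.diagonal_apply_eq, Matrix.zero_apply, hLind] at hi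
    simp only [Matrix.add_apply, Matrix.smul_apply, Matrix.sub_apply, Matrix.sum_apply,
      Matrix.mul_diagonal, Matrix.diagonal_mul, Matrix.mul_apply,
      Matrix.conjTranspose_apply, smul_eq_mul, hv] at hi
    simp only [Matrix.diagonal_apply, mul_ite, ite_mul, mul_one, mul_zero, zero_mul,
      one_mul, Finset.sum_ite_eq, Finset.sum_ite_eq', Finset.mem_univ, if_true,
      if_neg hij, if_neg hij.symm, sub_zero, zero_sub, mul_zero, neg_zero, zero_add,
      sub_self] at hi
    have hi2 : ∑ x : Fin ℓ, (Complex.normSq (Lm x i j) : ℝ) = 0 := by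
      have h3 : ((∑ x : Fin ℓ, (Complex.normSq (Lm x i j) : ℝ) : ℝ) : ℂ) = 0 := by
        push_cast
        rw [← hi]
        refine Finset.sum_congr rfl fun x _ => ?_
        rw [← Complex.mul_conj]
        rfl
      exact_mod_cast h3
    have := (Finset.sum_eq_zero_iff_of_nonneg (fun x _ => Complex.normSq_nonneg (Lm x i j))).mp hi2 k (Finset.mem_univ k)
    exact Complex.normSq_eq_zero.mp this
  · intro hdiag X
    rw [hPi X, hPi]
    set v : Fin d → ℂ := fun i => X i i with hv
    have hterm : ∀ k : Fin ℓ, Lm k * Matrix.diagonal v * (Lm k)ᴴ -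
        (1/2 : ℂ) • ((Lm k)ᴴ * Lm k * Matrix.diagonal v +
          Matrix.diagonal v * ((Lm k)ᴴ * Lm k)) = 0 := by
      intro k
      obtain ⟨w, hw⟩ : ∃ w, Lm k = Matrix.diagonal w :=
        ⟨Matrix.diag (Lm k), ((hdiag k).diagonal_diag).symm⟩
      rw [hw]
      ext a b
      simp only [Matrix.diagonal_conjTranspose, Matrix.diagonal_mul_diagonal,
        Matrix.sub_apply, Matrix.smul_apply, Matrix.add_apply, Matrix.diagonal_apply,
        Matrix.zero_apply, smul_eq_mul, _root_.Pi.star_apply]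
      split_ifs with hab
      · ring
      · simp
    have hent : ∀ a, Lind (Matrix.diagonal v) a a = 0 := by
      intro a
      rw [hLind]
      simp only [hterm, Finset.sum_const_zero, add_zero, Matrix.smul_apply,
        Matrix.sub_apply, Matrix.mul_diagonal, Matrix.diagonal_mul, smul_eq_mul]
      ring
    ext a b
    simp [Matrix.diagonal_apply, hent]
end

section
/- Let L be a Lindbladian on M_d(ℂ) with GKSL decomposition given by a Hermitian H and Kraus operators L_k, and Π the orthogonal projection onto matrices diagonal in an orthonormal basis (e_i). Then Π ∘ L = 0 and L ∘ Π = 0 if and only if H and all L_k are diagonal in the basis (e_i). -/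
open Matrix

private lemma isDiag_mul_apply' {d : ℕ} {A : Matrix (Fin d) (Fin d) ℂ} (hA : A.IsDiag)
    (X : Matrix (Fin d) (Fin d) ℂ) (i b : Fin d) : (A * X) i b = A i i * X i b := by
  rw [Matrix.mul_apply, Finset.sum_eq_single i]
  · intro c _ hc; rw [hA (Ne.symm hc), zero_mul]
  · intro h; exact absurd (Finset.mem_univ i) h

private lemma mul_isDiag_apply' {d : ℕ} {A : Matrix (Fin d) (Fin d) ℂ} (hA : A.IsDiag)
    (X : Matrix (Fin d) (Fin d) ℂ) (a i : Fin d) : (X * A) a i = X a i * A i i := by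
  rw [Matrix.mul_apply, Finset.sum_eq_single i]
  · intro c _ hc; rw [hA hc, mul_zero]
  · intro h; exact absurd (Finset.mem_univ i) h

private lemma ldl_apply' {d : ℕ} (L : Matrix (Fin d) (Fin d) ℂ) (j a b : Fin d) :
    (L * Matrix.diagonal (fun i => if i = j then (1:ℂ) else 0) * Lᴴ) a b
      = L a j * (starRingEnd ℂ) (L b j) := by
  rw [Matrix.mul_assoc]
  simp [Matrix.mul_apply, Matrix.diagonal_apply, Matrix.conjTranspose_apply, ite_mul, mul_ite]

private lemma term_diag_entry' {d : ℕ} {L : Matrix (Fin d) (Fin d) ℂ} (hL : L.IsDiag)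
    (X : Matrix (Fin d) (Fin d) ℂ) (i : Fin d) :
    (L * X * Lᴴ) i i - (1/2 : ℂ) * ((Lᴴ * L * X) i i + (X * (Lᴴ * L)) i i) = 0 := by
  rw [mul_isDiag_apply' hL.conjTranspose, isDiag_mul_apply' hL, Matrix.mul_assoc,
    isDiag_mul_apply' hL.conjTranspose, isDiag_mul_apply' hL, ← Matrix.mul_assoc,
    mul_isDiag_apply' hL, mul_isDiag_apply' hL.conjTranspose]
  ring

private lemma term_diag_full' {d : ℕ} {L : Matrix (Fin d) (Fin d) ℂ} (hL : L.IsDiag)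
    (f : Fin d → ℂ) (a b : Fin d) :
    (L * Matrix.diagonal f * Lᴴ) a b
      - (1/2 : ℂ) * ((Lᴴ * L * Matrix.diagonal f) a b + (Matrix.diagonal f * (Lᴴ * L)) a b) = 0 := by
  simp only [mul_isDiag_apply' hL.conjTranspose, Matrix.mul_diagonal, Matrix.diagonal_mul,
    isDiag_mul_apply' hL.conjTranspose]
  by_cases hab : a = b
  · subst hab; ring
  · rw [hL hab]; ring

/-- For a Lindbladian in GKSL form and `Π` the orthogonal projection onto diagonal
matrices, `Π ∘ L = 0` and `L ∘ Π = 0` iff the Hamiltonian and all Kraus operators are diagonal. -/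
theorem pi_lind_and_lind_pi_eq_zero_iff_all_diagonal
    {d ℓ : ℕ} (H : Matrix (Fin d) (Fin d) ℂ) (Lm : Fin ℓ → Matrix (Fin d) (Fin d) ℂ)
    (hH : H.IsHermitian)
    (Lind : Matrix (Fin d) (Fin d) ℂ → Matrix (Fin d) (Fin d) ℂ)
    (hLind : ∀ X, Lind X = -Complex.I • (H * X - X * H) +
      ∑ k, (Lm k * X * (Lm k)ᴴ - (1/2 : ℂ) • ((Lm k)ᴴ * Lm k * X + X * ((Lm k)ᴴ * Lm k))))
    (Pi : Matrix (Fin d) (Fin d) ℂ → Matrix (Fin d) (Fin d) ℂ)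
    (hPi : ∀ X, Pi X = Matrix.diagonal (fun i => X i i)) :
    ((∀ X, Pi (Lind X) = 0) ∧ (∀ X, Lind (Pi X) = 0)) ↔ (H.IsDiag ∧ ∀ k, (Lm k).IsDiag) := by
  constructor
  · rintro ⟨h1, h2⟩
    have hD : ∀ j : Fin d,
        Lind (Matrix.diagonal (fun i => if i = j then (1:ℂ) else 0)) = 0 := by
      intro j
      have := h2 (Matrix.diagonal (fun i => if i = j then (1:ℂ) else 0))
      simpa [hPi] using this
    have hL0 : ∀ (k : Fin ℓ) (a j : Fin d), a ≠ j → Lm k a j = 0 := by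
      intro k a j haj
      have h := Matrix.ext_iff.2 ((hLind _).symm.trans (hD j)) a a
      simp [Matrix.add_apply, Matrix.sub_apply, Matrix.smul_apply, Matrix.sum_apply,
        Matrix.mul_diagonal, Matrix.diagonal_mul, smul_eq_mul, ldl_apply', haj,
        Complex.mul_conj] at h
      have h' : ∑ x : Fin ℓ, Complex.normSq (Lm x a j) = 0 := by exact_mod_cast h
      exact Complex.normSq_eq_zero.1
        ((Finset.sum_eq_zero_iff_of_nonneg (fun i _ => Complex.normSq_nonneg _)).1 h'
          k (Finset.mem_univ _))
    have hH0 : H.IsDiag := by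
      intro a j haj
      have hLaj : ∀ k : Fin ℓ, Lm k a j = 0 := fun k => hL0 k a j haj
      have hone : ∀ k : Fin ℓ, ((Lm k)ᴴ * Lm k) a j = 0 := by
        intro k
        rw [Matrix.mul_apply]
        apply Finset.sum_eq_zero
        intro c _
        by_cases hc : c = a
        · subst hc; rw [hLaj k, mul_zero]
        · rw [Matrix.conjTranspose_apply, hL0 k c a hc, star_zero, zero_mul]
      have h := Matrix.ext_iff.2 ((hLind _).symm.trans (hD j)) a j
      simp [Matrix.add_apply, Matrix.sub_apply, Matrix.smul_apply, Matrix.sum_apply,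
        Matrix.mul_diagonal, Matrix.diagonal_mul, smul_eq_mul, ldl_apply', haj, hone,
        hLaj, Complex.I_ne_zero, Complex.ext_iff] at h
      exact Complex.ext_iff.2 h
    exact ⟨hH0, fun k i j h => hL0 k i j h⟩
  · rintro ⟨hHd, hLd⟩
    constructor
    · intro X
      rw [hLind, hPi]
      have hz : ∀ i : Fin d, (-Complex.I • (H * X - X * H) +
          ∑ k, (Lm k * X * (Lm k)ᴴ - (1/2 : ℂ) • ((Lm k)ᴴ * Lm k * X + X * ((Lm k)ᴴ * Lm k)))) i i = 0 := by
        intro i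
        have hk : ∀ k : Fin ℓ,
            (Lm k * X * (Lm k)ᴴ - (1/2 : ℂ) • ((Lm k)ᴴ * Lm k * X + X * ((Lm k)ᴴ * Lm k))) i i = 0 := by
          intro k
          rw [Matrix.sub_apply, Matrix.smul_apply, Matrix.add_apply, smul_eq_mul]
          exact term_diag_entry' (hLd k) X i
        rw [Matrix.add_apply, Matrix.smul_apply, Matrix.sub_apply, Matrix.sum_apply,
          Finset.sum_congr rfl (fun k _ => hk k), Finset.sum_const_zero,
          isDiag_mul_apply' hHd, mul_isDiag_apply' hHd]
        simp [mul_comm]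
      ext a b
      rcases eq_or_ne a b with rfl | hab
      · simp only [Matrix.diagonal_apply_eq, Matrix.zero_apply]
        exact hz a
      · simp [Matrix.diagonal_apply_ne _ hab]
    · intro X
      rw [hLind, hPi]
      ext a b
      have hHe : (H * Matrix.diagonal (fun i => X i i)) a b
          - (Matrix.diagonal (fun i => X i i) * H) a b = 0 := by
        rw [Matrix.mul_diagonal, Matrix.diagonal_mul]
        by_cases hab : a = b
        · subst hab; ring
        · rw [hHd hab]; ring
      have hk : ∀ k : Fin ℓ,
          (Lm k * Matrix.diagonal (fun i => X i i) * (Lm k)ᴴ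
            - (1/2 : ℂ) • ((Lm k)ᴴ * Lm k * Matrix.diagonal (fun i => X i i)
              + Matrix.diagonal (fun i => X i i) * ((Lm k)ᴴ * Lm k))) a b = 0 := by
        intro k
        rw [Matrix.sub_apply, Matrix.smul_apply, Matrix.add_apply, smul_eq_mul]
        exact term_diag_full' (hLd k) _ a b
      rw [Matrix.add_apply, Matrix.smul_apply, Matrix.sub_apply, Matrix.sum_apply,
        Finset.sum_congr rfl (fun k _ => hk k), Finset.sum_const_zero, add_zero, hHe,
        smul_zero, Matrix.zero_apply]
end

section
/- Let L₁,…,L_ℓ be d×d matrices diagonal in an orthonormal basis (e_i), η_k ∈ [0,1], and for a density matrix ρ define f(ρ) := 4 Σ_k Σ_i η_k ( Re(L_k)_{ii} − R_k(ρ) )² ρ_{ii}², where R_k(ρ) = Σ_i Re(L_k)_{ii} ρ_{ii}. Assume the identifiability condition: for all i ≠ j there is k with η_k > 0 and Re(L_k)_{ii} ≠ Re(L_k)_{jj}. Then f(ρ) = 0 if and only if ρ_{ii} ρ_{jj} = 0 for all i ≠ j together with ρ being a density matrix forces ρ's diagonal to be a standard basis vector; in particular, if moreover ρ is diagonal, f(ρ)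 = 0 iff ρ = E_{i,i} for some i. -/
open Matrix
open scoped ComplexOrder

/-!
Writing `p i = ρᵢᵢ`, the intensity is a sum of nonnegative terms, so it vanishes iff
`Re (L_k)ᵢᵢ = R_k(ρ)` whenever `η_k > 0` and `p i ≠ 0`. Two distinct indices in the support
of `p` would then agree on every such `k`, contradicting identifiability; hence the support is
a single index, which carries the whole mass `∑ p = 1`.
-/

theorem Fintype.exists_eq_single_of_sum_eq {ι M : Type*} [Fintype ι] [DecidableEq ι]
    [AddCommMonoid M] {p : ι → M} {c : M} (hc : c ≠ 0) (hp : ∑ i, p i = c)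
    (hsupp : ∀ i j, p i ≠ 0 → p j ≠ 0 → i = j) : ∃ i, p = Pi.single i c := by
  obtain ⟨i, -, hi⟩ := Finset.exists_ne_zero_of_sum_ne_zero (hp.trans_ne hc)
  have hzero : ∀ j, j ≠ i → p j = 0 := fun j hj => by_contra fun h => hj (hsupp j i h hi)
  refine ⟨i, funext fun j => ?_⟩
  rcases eq_or_ne j i with rfl | hj
  · rw [Pi.single_eq_same, ← hp, Finset.sum_eq_single j (fun k _ hk => hzero k hk) (by simp)]
  · rw [Pi.single_eq_of_ne hj, hzero j hj]

theorem Matrix.IsHermitian.ofReal_re_apply_self {n : Type*} {A : Matrix n n ℂ}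
    (hA : A.IsHermitian) (i : n) : ((A i i).re : ℂ) = A i i :=
  Complex.conj_eq_iff_re.mp (hA.apply i i)

theorem Matrix.IsDiag.eq_single_iff {n α : Type*} [DecidableEq n] [Zero α] {A : Matrix n n α}
    (hA : A.IsDiag) (i : n) (c : α) : A = single i i c ↔ A.diag = Pi.single i c := by
  rw [← diagonal_single]
  constructor
  · rintro rfl
    exact diag_diagonal _
  · intro h
    rw [← hA.diagonal_diag, h]

section DiagNoise

variable {ι κ : Type*} [Fintype ι] [Fintype κ]

/-- The paper's `f`, with `a k i = Re (L_k)ᵢᵢ` and `p i = ρᵢᵢ`; the inner sum is `R_k`. -/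
def diagNoiseIntensity (η : κ → ℝ) (a : κ → ι → ℝ) (p : ι → ℝ) : ℝ :=
  4 * ∑ k, ∑ i, η k * (a k i - ∑ j, a k j * p j) ^ 2 * p i ^ 2

theorem diagNoiseIntensity_eq_zero_iff {η : κ → ℝ} (hη : ∀ k, 0 ≤ η k) (a : κ → ι → ℝ)
    (p : ι → ℝ) :
    diagNoiseIntensity η a p = 0 ↔
      ∀ k i, 0 < η k → p i ≠ 0 → a k i = ∑ j, a k j * p j := by
  have hterm : ∀ k i, 0 ≤ η k * (a k i - ∑ j, a k j * p j) ^ 2 * p i ^ 2 := fun k i => by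
    have := hη k
    positivity
  simp only [diagNoiseIntensity, mul_eq_zero, four_ne_zero, false_or,
    Finset.sum_eq_zero_iff_of_nonneg fun k _ => Finset.sum_nonneg fun i _ => hterm k i,
    Finset.sum_eq_zero_iff_of_nonneg fun i _ => hterm _ i, Finset.mem_univ, true_implies,
    pow_eq_zero_iff two_ne_zero, sub_eq_zero]
  refine forall_congr' fun k => forall_congr' fun i => ?_
  rw [(hη k).lt_iff_ne, ne_comm]
  tauto

theorem diagNoiseIntensity_single [DecidableEq ι] (η : κ → ℝ) (a : κ → ι → ℝ) (i : ι) :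
    diagNoiseIntensity η a (Pi.single i 1) = 0 := by
  have hmean : ∀ k, ∑ j, a k j * (Pi.single i 1 : ι → ℝ) j = a k i := fun k => by
    simp [Pi.single_apply]
  refine mul_eq_zero_of_right _ (Finset.sum_eq_zero fun k _ => Finset.sum_eq_zero fun j _ => ?_)
  rcases eq_or_ne j i with rfl | hj
  · simp [hmean]
  · simp [hj]

theorem diagNoiseIntensity_eq_zero_iff_exists_single [DecidableEq ι] {η : κ → ℝ}
    (hη : ∀ k, 0 ≤ η k) {a : κ → ι → ℝ}
    (hident : ∀ i j, i ≠ j → ∃ k, 0 < η k ∧ a k i ≠ a k j) {p : ι → ℝ}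
    (hp : ∑ i, p i = 1) :
    diagNoiseIntensity η a p = 0 ↔ ∃ i, p = Pi.single i 1 := by
  refine ⟨fun h => Fintype.exists_eq_single_of_sum_eq one_ne_zero hp fun i j hi hj => ?_, ?_⟩
  · by_contra hij
    obtain ⟨k, hk, hne⟩ := hident i j hij
    have hmean := (diagNoiseIntensity_eq_zero_iff hη a p).mp h k
    exact hne ((hmean i hk hi).trans (hmean j hk hj).symm)
  · rintro ⟨i, rfl⟩
    exact diagNoiseIntensity_single η a i

end DiagNoise

theorem noise_vanishes_iff_pointer_state_general
    {d ℓ : ℕ} (Lm : Fin ℓ → Matrix (Fin d) (Fin d) ℂ) (η : Fin ℓ → ℝ)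
    (hη : ∀ k, η k ∈ Set.Icc (0:ℝ) 1)
    (hident : ∀ i j : Fin d, i ≠ j →
      ∃ k, 0 < η k ∧ (Lm k i i).re ≠ (Lm k j j).re)
    (ρ : Matrix (Fin d) (Fin d) ℂ) (hρpos : ρ.PosSemidef) (hρtr : ρ.trace = 1)
    (f : Matrix (Fin d) (Fin d) ℂ → ℝ)
    (hf : ∀ σ : Matrix (Fin d) (Fin d) ℂ, f σ =
      4 * ∑ k, ∑ i, η k * ((Lm k i i).re - ∑ j, (Lm k j j).re * (σ j j).re)^2
        * ((σ i i).re)^2) :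
    (f ρ = 0 ↔ ∃ i, ∀ j, ρ j j = if j = i then 1 else 0) ∧
    (ρ.IsDiag → (f ρ = 0 ↔ ∃ i, ρ = Matrix.single i i 1)) := by
  have hsum : ∑ i, (ρ i i).re = 1 := by
    simpa [trace, Complex.re_sum] using congrArg Complex.re hρtr
  have hpointer (i : Fin d) :
      (fun j => (ρ j j).re) = Pi.single i 1 ↔ ∀ j, ρ j j = if j = i then 1 else 0 := by
    refine funext_iff.trans (forall_congr' fun j => ?_)
    conv_rhs => rw [← hρpos.isHermitian.ofReal_re_apply_self j]
    rw [Pi.single_apply]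
    split_ifs <;> norm_cast
  have hmain : f ρ = 0 ↔ ∃ i, ∀ j, ρ j j = if j = i then 1 else 0 := by
    rw [show f ρ = diagNoiseIntensity η (fun k i => (Lm k i i).re) (fun i => (ρ i i).re) from hf ρ,
      diagNoiseIntensity_eq_zero_iff_exists_single (fun k => (hη k).1) hident hsum]
    exact exists_congr hpointer
  refine ⟨hmain, fun hρdiag => hmain.trans (exists_congr fun i => ?_)⟩
  rw [hρdiag.eq_single_iff, funext_iff]
  simp only [diag_apply, Pi.single_apply]

/-- Under the identifiability condition, the diagonal noise intensity
`f(ρ) = 4 Σ_k Σ_i η_k (Re (L_k)_{ii} − R_k(ρ))² ρ_{ii}²` vanishes exactly on states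
whose diagonal is a standard basis vector; in particular a diagonal density matrix `ρ`
satisfies `f(ρ) = 0` iff `ρ = E_{i,i}` for some `i`. -/
theorem noise_vanishes_iff_pointer_state
    {d ℓ : ℕ} (Lm : Fin ℓ → Matrix (Fin d) (Fin d) ℂ) (η : Fin ℓ → ℝ)
    (hLdiag : ∀ k, (Lm k).IsDiag) (hη : ∀ k, η k ∈ Set.Icc (0:ℝ) 1)
    (hident : ∀ i j : Fin d, i ≠ j →
      ∃ k, 0 < η k ∧ (Lm k i i).re ≠ (Lm k j j).re)
    (ρ : Matrix (Fin d) (Fin d) ℂ) (hρpos : ρ.PosSemidef) (hρtr : ρ.trace = 1)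
    (f : Matrix (Fin d) (Fin d) ℂ → ℝ)
    (hf : ∀ σ : Matrix (Fin d) (Fin d) ℂ, f σ =
      4 * ∑ k, ∑ i, η k * ((Lm k i i).re - ∑ j, (Lm k j j).re * (σ j j).re)^2
        * ((σ i i).re)^2) :
    (f ρ = 0 ↔ ∃ i, ∀ j, ρ j j = if j = i then 1 else 0) ∧
    (ρ.IsDiag → (f ρ = 0 ↔ ∃ i, ρ = Matrix.single i i 1)) :=
  noise_vanishes_iff_pointer_state_general Lm η hη hident ρ hρpos hρtr f hf
end
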